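/- arXiv:1804.06933 — 6 statements merged into one kernel-verified Lean document; each statement's English description precedes it below -/
import Mathlib

section
/- If (A,∧,∨,→,0,1) is a weak Heyting algebra, then (A,∧,∨,∧,→,1) (taking the monoid operation to be meet) is a DLCMI; in particular a→b ≤ (a∧c)→(b∧c) holds in every weak Heyting algebra. -/
/-! The monoid axioms for `⊓` and its distributivity over `⊔` hold in any bounded distributive
lattice. For the last axiom, `→` is antitone in its first argument (by
`(a → c) ⊓ (b → c) = (a ⊔ b) → c`) and `x → y = ⊤` whenever `x ≤ y`; hence
`a → b ≤ (a ⊓ c) → b = ((a ⊓ c) → b) ⊓ ((a ⊓ c) → c) = (a ⊓ c) → (b ⊓ c)`. -/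

section WeakImplication

variable {α : Type*} {imp : α → α → α}

theorem imp_antitone_left [Lattice α]
    (sup_imp : ∀ a b c : α, imp a c ⊓ imp b c = imp (a ⊔ b) c)
    {x y : α} (hxy : x ≤ y) (z : α) : imp y z ≤ imp x z := by
  rw [← sup_eq_right.mpr hxy, ← sup_imp]
  exact inf_le_left

theorem imp_eq_top_of_le [Lattice α] [OrderTop α]
    (sup_imp : ∀ a b c : α, imp a c ⊓ imp b c = imp (a ⊔ b) c)
    (imp_self_top : ∀ a : α, imp a a = ⊤) {x y : α} (hxy : x ≤ y) : imp x y = ⊤ :=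
  top_le_iff.mp (imp_self_top y ▸ imp_antitone_left sup_imp hxy y)

theorem imp_le_imp_inf_inf [Lattice α] [OrderTop α]
    (imp_inf : ∀ a b c : α, imp a b ⊓ imp a c = imp a (b ⊓ c))
    (sup_imp : ∀ a b c : α, imp a c ⊓ imp b c = imp (a ⊔ b) c)
    (imp_self_top : ∀ a : α, imp a a = ⊤) (a b c : α) :
    imp a b ≤ imp (a ⊓ c) (b ⊓ c) :=
  calc imp a b ≤ imp (a ⊓ c) b := imp_antitone_left sup_imp inf_le_left b
    _ = imp (a ⊓ c) b ⊓ imp (a ⊓ c) c := by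
      rw [imp_eq_top_of_le sup_imp imp_self_top inf_le_right, inf_top_eq]
    _ = imp (a ⊓ c) (b ⊓ c) := imp_inf _ _ _

end WeakImplication

theorem wh_is_dlcmi_general {α : Type*} [DistribLattice α] [BoundedOrder α]
    (imp : α → α → α)
    (w1 : ∀ a b c : α, imp a b ⊓ imp a c = imp a (b ⊓ c))
    (w2 : ∀ a b c : α, imp a c ⊓ imp b c = imp (a ⊔ b) c)
    (w4 : ∀ a : α, imp a a = ⊤) :
    (∀ a : α, a ⊓ ⊤ = a) ∧
    (∀ a b : α, a ⊓ b = b ⊓ a) ∧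
    (∀ a b c : α, (a ⊓ b) ⊓ c = a ⊓ (b ⊓ c)) ∧
    (∀ a b c : α, (a ⊔ b) ⊓ c = (a ⊓ c) ⊔ (b ⊓ c)) ∧
    (∀ a b c : α, imp a b ≤ imp (a ⊓ c) (b ⊓ c)) :=
  ⟨inf_top_eq, inf_comm, inf_assoc, inf_sup_right, imp_le_imp_inf_inf w1 w2 w4⟩

theorem wh_is_dlcmi {α : Type*} [DistribLattice α] [BoundedOrder α]
    (imp : α → α → α)
    (w1 : ∀ a b c : α, imp a b ⊓ imp a c = imp a (b ⊓ c))
    (w2 : ∀ a b c : α, imp a c ⊓ imp b c = imp (a ⊔ b) c)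
    (w3 : ∀ a b c : α, imp a b ⊓ imp b c ≤ imp a c)
    (w4 : ∀ a : α, imp a a = ⊤) :
    (∀ a : α, a ⊓ ⊤ = a) ∧
    (∀ a b : α, a ⊓ b = b ⊓ a) ∧
    (∀ a b c : α, (a ⊓ b) ⊓ c = a ⊓ (b ⊓ c)) ∧
    (∀ a b c : α, (a ⊔ b) ⊓ c = (a ⊓ c) ⊔ (b ⊓ c)) ∧
    (∀ a b c : α, imp a b ≤ imp (a ⊓ c) (b ⊓ c)) :=
  wh_is_dlcmi_general imp w1 w2 w4
end

section
/- Let A be an algebra of type (2,2,2,2,0) satisfying axioms (1)–(8) of DLCMI. Then A satisfies a→b ≤ (a·c)→(b·c) for all a,b,c if and only if A satisfies (a→b)·(c→d) ≤ (a·c)→(b·d) for all a,b,c,d. -/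
/-!
Multiplying `a → b ≤ ac → bc` by `c → d ≤ bc → bd` (right-distributivity of `·` over `∨` makes `·`
monotone) and composing with (8) gives the forward direction; the converse is the case `c = d`,
where `c → c = 1`.
-/

section SupMulDistrib

variable {α : Type*} [SemilatticeSup α]

theorem mul_le_mul_right_of_sup_mul [Mul α]
    (hdist : ∀ a b c : α, (a ⊔ b) * c = a * c ⊔ b * c) {a b : α} (hab : a ≤ b) (c : α) :
    a * c ≤ b * c :=
  calc a * c ≤ a * c ⊔ b * c := le_sup_left
    _ = (a ⊔ b) * c := (hdist a b c).symm
    _ = b * c := by rw [sup_eq_right.mpr hab]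

theorem mul_le_mul_of_sup_mul [CommMagma α]
    (hdist : ∀ a b c : α, (a ⊔ b) * c = a * c ⊔ b * c) {a b c d : α} (hab : a ≤ b)
    (hcd : c ≤ d) : a * c ≤ b * d :=
  calc a * c ≤ b * c := mul_le_mul_right_of_sup_mul hdist hab c
    _ = c * b := mul_comm b c
    _ ≤ d * b := mul_le_mul_right_of_sup_mul hdist hcd b
    _ = b * d := mul_comm d b

theorem imp_mul_imp_le_imp_mul [CommMagma α] {imp : α → α → α}
    (hdist : ∀ a b c : α, (a ⊔ b) * c = a * c ⊔ b * c)
    (htrans : ∀ a b c : α, imp a b * imp b c ≤ imp a c)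
    (hmul : ∀ a b c : α, imp a b ≤ imp (a * c) (b * c)) (a b c d : α) :
    imp a b * imp c d ≤ imp (a * c) (b * d) :=
  calc imp a b * imp c d ≤ imp (a * c) (b * c) * imp (c * b) (d * b) :=
        mul_le_mul_of_sup_mul hdist (hmul a b c) (hmul c d b)
    _ = imp (a * c) (b * c) * imp (b * c) (b * d) := by rw [mul_comm c b, mul_comm d b]
    _ ≤ imp (a * c) (b * d) := htrans _ _ _

end SupMulDistrib

theorem dlcmi_axiom9_iff_general {α : Type*} [DistribLattice α] [CommMonoid α]
    (imp : α → α → α)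
    (h6 : ∀ a : α, imp a a = 1)
    (h7 : ∀ a b c : α, (a ⊔ b) * c = a * c ⊔ b * c)
    (h8 : ∀ a b c : α, imp a b * imp b c ≤ imp a c) :
    (∀ a b c : α, imp a b ≤ imp (a * c) (b * c)) ↔
      (∀ a b c d : α, imp a b * imp c d ≤ imp (a * c) (b * d)) := by
  refine ⟨imp_mul_imp_le_imp_mul h7 h8, fun h a b c => ?_⟩
  simpa only [h6, mul_one] using h a b c c

theorem dlcmi_axiom9_iff {α : Type*} [DistribLattice α] [CommMonoid α]
    (htop : ∀ a : α, a ≤ 1)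
    (imp : α → α → α)
    (h4 : ∀ a b c : α, imp a b ⊓ imp a c = imp a (b ⊓ c))
    (h5 : ∀ a b c : α, imp a c ⊓ imp b c = imp (a ⊔ b) c)
    (h6 : ∀ a : α, imp a a = 1)
    (h7 : ∀ a b c : α, (a ⊔ b) * c = a * c ⊔ b * c)
    (h8 : ∀ a b c : α, imp a b * imp b c ≤ imp a c) :
    (∀ a b c : α, imp a b ≤ imp (a * c) (b * c)) ↔
      (∀ a b c d : α, imp a b * imp c d ≤ imp (a * c) (b * d)) :=
  dlcmi_axiom9_iff_general imp h6 h7 h8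
end

section
/- Let A be a DLCMI and a,b ∈ A. Define the relation R(a,b) by: (c,d) ∈ R(a,b) iff there exist natural numbers n,k with (C1) tₙᵏ(a,b)·(c∧a∧b) ≤ d∧a∧b and tₙᵏ(a,b)·(d∧a∧b) ≤ c∧a∧b, (C2) tₙᵏ(a,b)·(c∨a∨b) ≤ d∨a∨b and tₙᵏ(a,b)·(d∨a∨b) ≤ c∨a∨b, (C3) tₙᵏ(a,b) ≤ c↔d. Then (a,b) ∈ R(a,b) and R(a,b) is a congruence of the lattice reduct of A. -/
def boxIter {α : Type*} [One α] (imp : α → α → α) : ℕ → α → α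
  | 0, x => x
  | n + 1, x => imp 1 (boxIter imp n x)

def biimp {α : Type*} [SemilatticeInf α] (imp : α → α → α) (x y : α) : α :=
  imp x y ⊓ imp y x

def tt {α : Type*} [SemilatticeInf α] [One α] (imp : α → α → α) : ℕ → α → α → α
  | 0, a, b => biimp imp a b
  | n + 1, a, b => tt imp n a b ⊓ boxIter imp (n + 1) (biimp imp a b)

def IsLatCong {α : Type*} [Lattice α] (r : α → α → Prop) : Prop :=
  Equivalence r ∧ (∀ a b c : α, r a b → r (a ⊓ c) (b ⊓ c)) ∧
    (∀ a b c : α, r a b → r (a ⊔ c) (b ⊔ c))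

def Rrel {α : Type*} [DistribLattice α] [CommMonoid α] (imp : α → α → α)
    (a b c d : α) : Prop :=
  ∃ n k : ℕ,
    (tt imp n a b) ^ k * (c ⊓ a ⊓ b) ≤ d ⊓ a ⊓ b ∧
    (tt imp n a b) ^ k * (d ⊓ a ⊓ b) ≤ c ⊓ a ⊓ b ∧
    (tt imp n a b) ^ k * (c ⊔ a ⊔ b) ≤ d ⊔ a ⊔ b ∧
    (tt imp n a b) ^ k * (d ⊔ a ⊔ b) ≤ c ⊔ a ⊔ b ∧
    (tt imp n a b) ^ k ≤ biimp imp c d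

/-! Every clause of `Rrel imp a b c d` says that a power `u` of `tt imp n a b` witnesses an
inequality between `c` and `d`. Such witnesses are stable under shrinking `u`, compose
multiplicatively (the clauses `u * x ≤ y` chain, and `biimp` is transitive by
`(x → y) · (y → z) ≤ x → z`), and survive meeting or joining both sides with a fixed element
since `u ≤ 1` and `·` distributes over `⊔`. As `tt imp n a b` decreases in `n`, two witnesses
`tt imp n₁ a b ^ k₁` and `tt imp n₂ a b ^ k₂` are both above `tt imp (max n₁ n₂) a b ^ (k₁ + k₂)`,
which gives transitivity. -/

theorem IsOrderedMonoid.of_sup_mul {α : Type*} [CommMonoid α] [Lattice α]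
    (hmul : ∀ a b c : α, (a ⊔ b) * c = a * c ⊔ b * c) : IsOrderedMonoid α where
  mul_le_mul_left a b hab c := by
    rw [← sup_eq_right.mpr hab, hmul]
    exact le_sup_left

section Lattice

variable {α : Type*} [CommMonoid α] [Lattice α] [IsOrderedMonoid α]

theorem mul_inf_le_inf_of_le_one {u x y : α} (hu : u ≤ 1) (h : u * x ≤ y) (z : α) :
    u * (x ⊓ z) ≤ y ⊓ z :=
  le_inf ((mul_le_mul_right inf_le_left u).trans h) (mul_le_of_le_one_left' hu |>.trans inf_le_right)

theorem mul_sup_le_sup_of_le_one (hmul : ∀ a b c : α, (a ⊔ b) * c = a * c ⊔ b * c)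
    {u x y : α} (hu : u ≤ 1) (h : u * x ≤ y) (z : α) : u * (x ⊔ z) ≤ y ⊔ z := by
  rw [mul_comm, hmul, mul_comm x, mul_comm z]
  exact sup_le_sup h (mul_le_of_le_one_left' hu)

end Lattice

section Imp

variable {α : Type*} [Lattice α] (imp : α → α → α)

theorem imp_mono_right (himp_inf : ∀ a b c : α, imp a b ⊓ imp a c = imp a (b ⊓ c))
    (x : α) {y z : α} (h : y ≤ z) : imp x y ≤ imp x z := by
  rw [← inf_eq_left.mpr h, ← himp_inf]
  exact inf_le_right

theorem imp_anti_left (hsup_imp : ∀ a b c : α, imp a c ⊓ imp b c = imp (a ⊔ b) c)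
    {x y : α} (h : x ≤ y) (z : α) : imp y z ≤ imp x z := by
  rw [← sup_eq_right.mpr h, ← hsup_imp]
  exact inf_le_left

theorem imp_eq_one_of_le [One α] (htop : ∀ a : α, a ≤ 1)
    (hsup_imp : ∀ a b c : α, imp a c ⊓ imp b c = imp (a ⊔ b) c) (himp_self : ∀ a : α, imp a a = 1)
    {x y : α} (h : x ≤ y) : imp x y = 1 :=
  (htop _).antisymm ((himp_self y).symm.trans_le (imp_anti_left imp hsup_imp h y))

theorem biimp_comm (x y : α) : biimp imp x y = biimp imp y x :=
  inf_comm _ _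

theorem biimp_self [One α] (himp_self : ∀ a : α, imp a a = 1) (x : α) : biimp imp x x = 1 := by
  rw [biimp, himp_self, inf_idem]

theorem biimp_mul_biimp_le [CommMonoid α] [IsOrderedMonoid α]
    (himp_trans : ∀ a b c : α, imp a b * imp b c ≤ imp a c) (x y z : α) :
    biimp imp x y * biimp imp y z ≤ biimp imp x z :=
  le_inf ((mul_le_mul' inf_le_left inf_le_left).trans (himp_trans x y z))
    ((mul_le_mul' inf_le_right inf_le_right).trans ((mul_comm _ _).trans_le (himp_trans z y x)))

theorem biimp_le_biimp_inf_right [One α] (htop : ∀ a : α, a ≤ 1)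
    (himp_inf : ∀ a b c : α, imp a b ⊓ imp a c = imp a (b ⊓ c))
    (hsup_imp : ∀ a b c : α, imp a c ⊓ imp b c = imp (a ⊔ b) c) (himp_self : ∀ a : α, imp a a = 1)
    (x y z : α) : biimp imp x y ≤ biimp imp (x ⊓ z) (y ⊓ z) := by
  have imp_le : ∀ x y : α, imp x y ≤ imp (x ⊓ z) (y ⊓ z) := fun x y => by
    rw [← himp_inf, imp_eq_one_of_le imp htop hsup_imp himp_self inf_le_right]
    exact le_inf (imp_anti_left imp hsup_imp inf_le_left y) (htop _)
  exact inf_le_inf (imp_le x y) (imp_le y x)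

theorem biimp_le_biimp_sup_right [One α] (htop : ∀ a : α, a ≤ 1)
    (himp_inf : ∀ a b c : α, imp a b ⊓ imp a c = imp a (b ⊓ c))
    (hsup_imp : ∀ a b c : α, imp a c ⊓ imp b c = imp (a ⊔ b) c) (himp_self : ∀ a : α, imp a a = 1)
    (x y z : α) : biimp imp x y ≤ biimp imp (x ⊔ z) (y ⊔ z) := by
  have imp_le : ∀ x y : α, imp x y ≤ imp (x ⊔ z) (y ⊔ z) := fun x y => by
    rw [← hsup_imp, imp_eq_one_of_le imp htop hsup_imp himp_self le_sup_right]
    exact le_inf (imp_mono_right imp himp_inf x le_sup_left) (htop _)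
  exact inf_le_inf (imp_le x y) (imp_le y x)

end Imp

theorem tt_antitone {α : Type*} [SemilatticeInf α] [One α] (imp : α → α → α) (a b : α) :
    Antitone fun n => tt imp n a b :=
  antitone_nat_of_succ_le fun _ => inf_le_left

section Witness

variable {α : Type*} [DistribLattice α] [CommMonoid α] (imp : α → α → α) (a b : α)

def RrelWitness (u c d : α) : Prop :=
  u * (c ⊓ a ⊓ b) ≤ d ⊓ a ⊓ b ∧ u * (d ⊓ a ⊓ b) ≤ c ⊓ a ⊓ b ∧
    u * (c ⊔ a ⊔ b) ≤ d ⊔ a ⊔ b ∧ u * (d ⊔ a ⊔ b) ≤ c ⊔ a ⊔ b ∧ u ≤ biimp imp c d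

theorem rrel_iff_exists_rrelWitness (c d : α) :
    Rrel imp a b c d ↔ ∃ n k : ℕ, RrelWitness imp a b (tt imp n a b ^ k) c d :=
  Iff.rfl

namespace RrelWitness

variable {imp a b}

theorem refl (himp_self : ∀ a : α, imp a a = 1) (c : α) : RrelWitness imp a b 1 c c := by
  simp only [RrelWitness, one_mul, le_refl, biimp_self imp himp_self, and_self]

theorem symm {u c d : α} (h : RrelWitness imp a b u c d) : RrelWitness imp a b u d c :=
  ⟨h.2.1, h.1, h.2.2.2.1, h.2.2.1, biimp_comm imp c d ▸ h.2.2.2.2⟩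

theorem anti [IsOrderedMonoid α] {u v c d : α} (hvu : v ≤ u) (h : RrelWitness imp a b u c d) :
    RrelWitness imp a b v c d :=
  have hmul : ∀ {x y : α}, u * x ≤ y → v * x ≤ y := fun hle => (mul_le_mul_left hvu _).trans hle
  ⟨hmul h.1, hmul h.2.1, hmul h.2.2.1, hmul h.2.2.2.1, hvu.trans h.2.2.2.2⟩

theorem trans [IsOrderedMonoid α] (himp_trans : ∀ a b c : α, imp a b * imp b c ≤ imp a c)
    {u v c d e : α} (hcd : RrelWitness imp a b u c d) (hde : RrelWitness imp a b v d e) :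
    RrelWitness imp a b (u * v) c e := by
  have forward : ∀ {x y z : α}, u * x ≤ y → v * y ≤ z → u * v * x ≤ z := fun {x y z} hxy hyz =>
    calc u * v * x = v * (u * x) := by rw [mul_comm u, mul_assoc]
      _ ≤ v * _ := mul_le_mul_right hxy v
      _ ≤ _ := hyz
  have backward : ∀ {x y z : α}, v * z ≤ y → u * y ≤ x → u * v * z ≤ x := fun {x y z} hzy hyx =>
    calc u * v * z = u * (v * z) := mul_assoc u v z
      _ ≤ u * _ := mul_le_mul_right hzy u
      _ ≤ _ := hyx
  exact ⟨forward hcd.1 hde.1, backward hde.2.1 hcd.2.1, forward hcd.2.2.1 hde.2.2.1,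
    backward hde.2.2.2.1 hcd.2.2.2.1,
    (mul_le_mul' hcd.2.2.2.2 hde.2.2.2.2).trans (biimp_mul_biimp_le imp himp_trans c d e)⟩

theorem inf_right [IsOrderedMonoid α] (htop : ∀ a : α, a ≤ 1)
    (himp_inf : ∀ a b c : α, imp a b ⊓ imp a c = imp a (b ⊓ c))
    (hsup_imp : ∀ a b c : α, imp a c ⊓ imp b c = imp (a ⊔ b) c) (himp_self : ∀ a : α, imp a a = 1)
    {u c d : α} (hu : u ≤ 1) (h : RrelWitness imp a b u c d) (e : α) :
    RrelWitness imp a b u (c ⊓ e) (d ⊓ e) := by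
  have inf_eq : ∀ x, x ⊓ e ⊓ a ⊓ b = x ⊓ a ⊓ b ⊓ e := fun x => by
    rw [inf_right_comm x, inf_right_comm (x ⊓ a)]
  have sup_eq : ∀ x, x ⊓ e ⊔ a ⊔ b = (x ⊔ a ⊔ b) ⊓ (e ⊔ a ⊔ b) := fun x => by
    rw [sup_inf_right, sup_inf_right]
  simp only [RrelWitness, inf_eq, sup_eq]
  exact ⟨mul_inf_le_inf_of_le_one hu h.1 e, mul_inf_le_inf_of_le_one hu h.2.1 e,
    mul_inf_le_inf_of_le_one hu h.2.2.1 _, mul_inf_le_inf_of_le_one hu h.2.2.2.1 _,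
    h.2.2.2.2.trans (biimp_le_biimp_inf_right imp htop himp_inf hsup_imp himp_self c d e)⟩

theorem sup_right [IsOrderedMonoid α] (htop : ∀ a : α, a ≤ 1)
    (himp_inf : ∀ a b c : α, imp a b ⊓ imp a c = imp a (b ⊓ c))
    (hsup_imp : ∀ a b c : α, imp a c ⊓ imp b c = imp (a ⊔ b) c) (himp_self : ∀ a : α, imp a a = 1)
    (hmul : ∀ a b c : α, (a ⊔ b) * c = a * c ⊔ b * c)
    {u c d : α} (hu : u ≤ 1) (h : RrelWitness imp a b u c d) (e : α) :
    RrelWitness imp a b u (c ⊔ e) (d ⊔ e) := by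
  have inf_eq : ∀ x, (x ⊔ e) ⊓ a ⊓ b = x ⊓ a ⊓ b ⊔ e ⊓ a ⊓ b := fun x => by
    rw [inf_sup_right, inf_sup_right]
  have sup_eq : ∀ x, x ⊔ e ⊔ a ⊔ b = x ⊔ a ⊔ b ⊔ e := fun x => by
    rw [sup_right_comm x, sup_right_comm (x ⊔ a)]
  simp only [RrelWitness, inf_eq, sup_eq]
  exact ⟨mul_sup_le_sup_of_le_one hmul hu h.1 _, mul_sup_le_sup_of_le_one hmul hu h.2.1 _,
    mul_sup_le_sup_of_le_one hmul hu h.2.2.1 e, mul_sup_le_sup_of_le_one hmul hu h.2.2.2.1 e,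
    h.2.2.2.2.trans (biimp_le_biimp_sup_right imp htop himp_inf hsup_imp himp_self c d e)⟩

theorem generators [IsOrderedMonoid α] (hu : biimp imp a b ≤ 1) :
    RrelWitness imp a b (biimp imp a b) a b := by
  have shrink : ∀ {x y : α}, x ≤ y → biimp imp a b * x ≤ y := fun hxy =>
    (mul_le_of_le_one_left' hu).trans hxy
  refine ⟨shrink ?_, shrink ?_, shrink ?_, shrink ?_, le_rfl⟩
  all_goals simp [inf_comm, sup_comm]

end RrelWitness

end Witness

theorem Rrel.trans {α : Type*} [DistribLattice α] [CommMonoid α] [IsOrderedMonoid α]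
    {imp : α → α → α} (himp_trans : ∀ a b c : α, imp a b * imp b c ≤ imp a c) {a b c d e : α}
    (hcd : Rrel imp a b c d) (hde : Rrel imp a b d e) : Rrel imp a b c e := by
  obtain ⟨n₁, k₁, h₁⟩ := (rrel_iff_exists_rrelWitness imp a b c d).mp hcd
  obtain ⟨n₂, k₂, h₂⟩ := (rrel_iff_exists_rrelWitness imp a b d e).mp hde
  refine ⟨max n₁ n₂, k₁ + k₂, (h₁.trans himp_trans h₂).anti ?_⟩
  rw [pow_add]
  exact mul_le_mul' (pow_le_pow_left' (tt_antitone imp a b (le_max_left n₁ n₂)) k₁)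
    (pow_le_pow_left' (tt_antitone imp a b (le_max_right n₁ n₂)) k₂)

theorem dlcmi_Rrel_latcong_general {α : Type*} [DistribLattice α] [CommMonoid α]
    (htop : ∀ a : α, a ≤ 1)
    (imp : α → α → α)
    (h4 : ∀ a b c : α, imp a b ⊓ imp a c = imp a (b ⊓ c))
    (h5 : ∀ a b c : α, imp a c ⊓ imp b c = imp (a ⊔ b) c)
    (h6 : ∀ a : α, imp a a = 1)
    (h7 : ∀ a b c : α, (a ⊔ b) * c = a * c ⊔ b * c)
    (h8 : ∀ a b c : α, imp a b * imp b c ≤ imp a c)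
    (a b : α) :
    Rrel imp a b a b ∧ IsLatCong (fun c d => Rrel imp a b c d) := by
  have := IsOrderedMonoid.of_sup_mul h7
  have hle_one : ∀ n k : ℕ, tt imp n a b ^ k ≤ 1 := fun _ k => Left.pow_le_one_of_le (htop _) k
  have hrefl : ∀ c, Rrel imp a b c c := fun c =>
    ⟨0, 0, (pow_zero (tt imp 0 a b)).symm ▸ RrelWitness.refl h6 c⟩
  refine ⟨⟨0, 1, (pow_one (tt imp 0 a b)).symm ▸ RrelWitness.generators (htop _)⟩,
    ⟨hrefl, fun ⟨n, k, h⟩ => ⟨n, k, RrelWitness.symm h⟩, Rrel.trans h8⟩, ?_, ?_⟩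
  · rintro c d e ⟨n, k, h⟩
    exact ⟨n, k, RrelWitness.inf_right htop h4 h5 h6 (hle_one n k) h e⟩
  · rintro c d e ⟨n, k, h⟩
    exact ⟨n, k, RrelWitness.sup_right htop h4 h5 h6 h7 (hle_one n k) h e⟩

theorem dlcmi_Rrel_latcong {α : Type*} [DistribLattice α] [CommMonoid α]
    (htop : ∀ a : α, a ≤ 1)
    (imp : α → α → α)
    (h4 : ∀ a b c : α, imp a b ⊓ imp a c = imp a (b ⊓ c))
    (h5 : ∀ a b c : α, imp a c ⊓ imp b c = imp (a ⊔ b) c)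
    (h6 : ∀ a : α, imp a a = 1)
    (h7 : ∀ a b c : α, (a ⊔ b) * c = a * c ⊔ b * c)
    (h8 : ∀ a b c : α, imp a b * imp b c ≤ imp a c)
    (h9 : ∀ a b c : α, imp a b ≤ imp (a * c) (b * c))
    (a b : α) :
    Rrel imp a b a b ∧ IsLatCong (fun c d => Rrel imp a b c d) :=
  dlcmi_Rrel_latcong_general htop imp h4 h5 h6 h7 h8 a b
end

section
/- Let A be a DLCMI, a,b ∈ A, and suppose tₙᵏ(a,b) ≤ c↔d and tₙᵏ(a,b) ≤ u↔w. Then tₙ²ᵏ(a,b)·(c→u) ≤ d→w. -/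
section SupDistribMul

variable {α : Type*} [SemilatticeSup α] [CommMonoid α]
  (sup_mul : ∀ a b c : α, (a ⊔ b) * c = a * c ⊔ b * c)
include sup_mul

theorem mul_le_mul_right_of_sup_mul_s13 {x y : α} (hxy : x ≤ y) (z : α) : x * z ≤ y * z := by
  rw [← sup_eq_right.mpr hxy, sup_mul]
  exact le_sup_left

theorem mul_le_mul_of_sup_mul_s13 {x y x' y' : α} (hxy : x ≤ y) (hxy' : x' ≤ y') :
    x * x' ≤ y * y' :=
  calc x * x' ≤ y * x' := mul_le_mul_right_of_sup_mul_s13 sup_mul hxy x'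
    _ = x' * y := mul_comm _ _
    _ ≤ y' * y := mul_le_mul_right_of_sup_mul_s13 sup_mul hxy' y
    _ = y * y' := mul_comm _ _

theorem mul_mul_imp_le_of_le_imp (imp : α → α → α)
    (imp_mul_imp : ∀ a b c : α, imp a b * imp b c ≤ imp a c)
    {t c d u w : α} (hdc : t ≤ imp d c) (huw : t ≤ imp u w) :
    t * t * imp c u ≤ imp d w :=
  calc t * t * imp c u ≤ imp d c * imp u w * imp c u :=
        mul_le_mul_right_of_sup_mul_s13 sup_mul (mul_le_mul_of_sup_mul_s13 sup_mul hdc huw) _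
    _ = imp d c * imp c u * imp u w := mul_right_comm _ _ _
    _ ≤ imp d u * imp u w := mul_le_mul_right_of_sup_mul_s13 sup_mul (imp_mul_imp d c u) _
    _ ≤ imp d w := imp_mul_imp d u w

end SupDistribMul

theorem dlcmi_imp_compat_general {α : Type*} [DistribLattice α] [CommMonoid α]
    (imp : α → α → α)
    (h7 : ∀ a b c : α, (a ⊔ b) * c = a * c ⊔ b * c)
    (h8 : ∀ a b c : α, imp a b * imp b c ≤ imp a c)
    (a b c d u w : α) (n k : ℕ)
    (hcd : (tt imp n a b) ^ k ≤ biimp imp c d)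
    (huw : (tt imp n a b) ^ k ≤ biimp imp u w) :
    (tt imp n a b) ^ (2 * k) * imp c u ≤ imp d w := by
  rw [pow_mul', sq]
  exact mul_mul_imp_le_of_le_imp h7 imp h8 (hcd.trans inf_le_right) (huw.trans inf_le_left)

theorem dlcmi_imp_compat {α : Type*} [DistribLattice α] [CommMonoid α]
    (htop : ∀ a : α, a ≤ 1)
    (imp : α → α → α)
    (h4 : ∀ a b c : α, imp a b ⊓ imp a c = imp a (b ⊓ c))
    (h5 : ∀ a b c : α, imp a c ⊓ imp b c = imp (a ⊔ b) c)
    (h6 : ∀ a : α, imp a a = 1)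
    (h7 : ∀ a b c : α, (a ⊔ b) * c = a * c ⊔ b * c)
    (h8 : ∀ a b c : α, imp a b * imp b c ≤ imp a c)
    (h9 : ∀ a b c : α, imp a b ≤ imp (a * c) (b * c))
    (a b c d u w : α) (n k : ℕ)
    (hcd : (tt imp n a b) ^ k ≤ biimp imp c d)
    (huw : (tt imp n a b) ^ k ≤ biimp imp u w) :
    (tt imp n a b) ^ (2 * k) * imp c u ≤ imp d w :=
  dlcmi_imp_compat_general imp h7 h8 a b c d u w n k hcd huw
end

section
/- Let A be a join-semilattice and g: A×A → A a function satisfying condition (M): for all a,b,c, b ≤ c implies g(a,c) ≤ g(a,b). Then the following are equivalent: (a) for every a the set {b ∈ A : g(a,b) ≤ b} has a minimum, defining f(a) := min{b : g(a,b) ≤ b}; (b) there exists h: A → A with g(a,h(a)) ≤ h(a) and h(a) ≤ g(a,b)∨b for all a,b. Moreover, in that case f = h. -/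
/-! For fixed `a`, put `φ b = g (a, b)`, an antitone map. Antitonicity makes `φ b ⊔ b` a
post-fixed point (`φ (φ b ⊔ b) ≤ φ b ≤ φ b ⊔ b`), so the least post-fixed point lies below
every `φ b ⊔ b`; conversely a post-fixed point `c` below every `φ b ⊔ b` is below every
post-fixed point `b`, since there `φ b ⊔ b = b`. Least elements being unique gives `f = h`. -/

section PostFixed

variable {α : Type*} [SemilatticeSup α] {φ : α → α}

theorem Antitone.map_sup_self_le (hφ : Antitone φ) (b : α) : φ (φ b ⊔ b) ≤ φ b ⊔ b :=
  (hφ le_sup_right).trans le_sup_left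

theorem IsLeast.le_map_sup_self (hφ : Antitone φ) {c : α} (hc : IsLeast {b | φ b ≤ b} c)
    (b : α) : c ≤ φ b ⊔ b :=
  hc.2 (hφ.map_sup_self_le b)

theorem isLeast_setOf_map_le_of_le_map_sup {c : α} (hc : φ c ≤ c)
    (hle : ∀ b, c ≤ φ b ⊔ b) : IsLeast {b | φ b ≤ b} c :=
  ⟨hc, fun b hb => (hle b).trans (sup_le hb le_rfl)⟩

end PostFixed

theorem min_characterization {α : Type*} [SemilatticeSup α]
    (g : α × α → α)
    (hM : ∀ a b c : α, b ≤ c → g (a, c) ≤ g (a, b)) :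
    ((∃ f : α → α, ∀ a : α, IsLeast {b : α | g (a, b) ≤ b} (f a)) ↔
      (∃ h : α → α, ∀ a b : α, g (a, h a) ≤ h a ∧ h a ≤ g (a, b) ⊔ b)) ∧
    (∀ f h : α → α,
      (∀ a : α, IsLeast {b : α | g (a, b) ≤ b} (f a)) →
      (∀ a b : α, g (a, h a) ≤ h a ∧ h a ≤ g (a, b) ⊔ b) →
      f = h) := by
  have hanti (a : α) : Antitone fun b => g (a, b) := fun b c hbc => hM a b c hbc
  have isLeast_of_bound (h : α → α) (hh : ∀ a b, g (a, h a) ≤ h a ∧ h a ≤ g (a, b) ⊔ b)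
      (a : α) : IsLeast {b | g (a, b) ≤ b} (h a) :=
    isLeast_setOf_map_le_of_le_map_sup (hh a a).1 fun b => (hh a b).2
  refine ⟨⟨?_, ?_⟩, ?_⟩
  · rintro ⟨f, hf⟩
    exact ⟨f, fun a b => ⟨(hf a).1, (hf a).le_map_sup_self (hanti a) b⟩⟩
  · rintro ⟨h, hh⟩
    exact ⟨h, isLeast_of_bound h hh⟩
  · intro f h hf hh
    funext a
    exact (hf a).unique (isLeast_of_bound h hh a)
end

section
/- Let A be a DLCMI with a smallest element 0, n ≥ 1 a natural number, and γ: A → A a unary function. Then γ satisfies (g1) a ∨ ¬(γ(a))ⁿ ≤ γ(a) and (g2) γ(a) ≤ a ∨ ¬bⁿ ∨ b for all a,b, if and only if γ satisfies (g3) ¬(γ(0))ⁿ ≤ γ(0), (g4) γ(0) ≤ b ∨ ¬bⁿ for all b, and (g5) γ(a) = a ∨ γ(0) for all a. In particular such γ is a polynomial function. -/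
/-! Writing `ν b` for `¬bⁿ`, (g1) with `a = ⊥` gives (g3), (g2) with `a = ⊥` gives (g4), and (g2) with
`b = γ ⊥` or `b = γ a` squeezes `γ a` to `a ⊔ γ ⊥`. Conversely, (g1) for `γ a = a ⊔ γ ⊥` only needs
`ν (a ⊔ γ ⊥) ≤ ν (γ ⊥)`: all that is used about `ν` is that it is antitone, which in a DLCMI follows
from `x ↦ xⁿ` being monotone and `x ↦ x → 0` antitone. -/

theorem mulLeftMono_of_sup_mul {α : Type*} [CommMonoid α] [Lattice α]
    (h : ∀ a b c : α, (a ⊔ b) * c = a * c ⊔ b * c) : MulLeftMono α where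
  elim c x y hxy := by
    calc c * x = x * c := mul_comm c x
      _ ≤ x * c ⊔ y * c := le_sup_left
      _ = y * c := by rw [← h, sup_eq_right.mpr hxy]
      _ = c * y := mul_comm y c

theorem antitone_imp_left {α : Type*} [Lattice α] {imp : α → α → α}
    (h : ∀ a b c : α, imp a c ⊓ imp b c = imp (a ⊔ b) c) (c : α) : Antitone (imp · c) := by
  intro x y hxy
  calc imp y c = imp (x ⊔ y) c := by rw [sup_eq_right.mpr hxy]
    _ = imp x c ⊓ imp y c := (h x y c).symm
    _ ≤ imp x c := inf_le_left

section

variable {α : Type*} [Lattice α] [OrderBot α] {ν γ : α → α}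

theorem g345_of_g12 (g1 : ∀ a, a ⊔ ν (γ a) ≤ γ a) (g2 : ∀ a b, γ a ≤ a ⊔ ν b ⊔ b) :
    ν (γ ⊥) ≤ γ ⊥ ∧ (∀ b, γ ⊥ ≤ b ⊔ ν b) ∧ ∀ a, γ a = a ⊔ γ ⊥ := by
  have g3 : ν (γ ⊥) ≤ γ ⊥ := le_sup_right.trans (g1 ⊥)
  have g4 (b : α) : γ ⊥ ≤ b ⊔ ν b := by simpa [sup_comm] using g2 ⊥ b
  refine ⟨g3, g4, fun a => le_antisymm ?_ ?_⟩
  · calc γ a ≤ a ⊔ ν (γ ⊥) ⊔ γ ⊥ := g2 a (γ ⊥)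
      _ ≤ a ⊔ γ ⊥ := sup_le (sup_le_sup_left g3 a) le_sup_right
  · have ha : a ≤ γ a := le_sup_left.trans (g1 a)
    have hbot : γ ⊥ ≤ γ a :=
      (g4 (γ a)).trans (sup_le le_rfl (le_sup_right.trans (g1 a)))
    exact sup_le ha hbot

theorem g12_of_g345 (hν : Antitone ν) (g3 : ν (γ ⊥) ≤ γ ⊥) (g4 : ∀ b, γ ⊥ ≤ b ⊔ ν b)
    (g5 : ∀ a, γ a = a ⊔ γ ⊥) : (∀ a, a ⊔ ν (γ a) ≤ γ a) ∧ ∀ a b, γ a ≤ a ⊔ ν b ⊔ b := by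
  refine ⟨fun a => ?_, fun a b => ?_⟩ <;> rw [g5 a]
  · have hν_le : ν (a ⊔ γ ⊥) ≤ γ ⊥ := (hν le_sup_right).trans g3
    exact sup_le le_sup_left (hν_le.trans le_sup_right)
  · calc a ⊔ γ ⊥ ≤ a ⊔ (b ⊔ ν b) := sup_le_sup_left (g4 b) a
      _ = a ⊔ ν b ⊔ b := by rw [sup_comm b, sup_assoc]

end

theorem dlcmi_gamma_characterization_general {α : Type*} [DistribLattice α] [CommMonoid α]
    [OrderBot α]
    (imp : α → α → α)
    (h5 : ∀ a b c : α, imp a c ⊓ imp b c = imp (a ⊔ b) c)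
    (h7 : ∀ a b c : α, (a ⊔ b) * c = a * c ⊔ b * c)
    (n : ℕ) (γ : α → α) :
    ((∀ a : α, a ⊔ imp ((γ a) ^ n) ⊥ ≤ γ a) ∧
     (∀ a b : α, γ a ≤ a ⊔ imp (b ^ n) ⊥ ⊔ b)) ↔
    ((imp ((γ ⊥) ^ n) ⊥ ≤ γ ⊥) ∧
     (∀ b : α, γ ⊥ ≤ b ⊔ imp (b ^ n) ⊥) ∧
     (∀ a : α, γ a = a ⊔ γ ⊥)) := by
  have hν : Antitone fun b : α => imp (b ^ n) ⊥ := by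
    have := mulLeftMono_of_sup_mul h7
    exact (antitone_imp_left h5 ⊥).comp_monotone (pow_left_mono n)
  exact ⟨fun h => g345_of_g12 h.1 h.2, fun h => g12_of_g345 hν h.1 h.2.1 h.2.2⟩

theorem dlcmi_gamma_characterization {α : Type*} [DistribLattice α] [CommMonoid α]
    [OrderBot α]
    (htop : ∀ a : α, a ≤ 1)
    (imp : α → α → α)
    (h4 : ∀ a b c : α, imp a b ⊓ imp a c = imp a (b ⊓ c))
    (h5 : ∀ a b c : α, imp a c ⊓ imp b c = imp (a ⊔ b) c)
    (h6 : ∀ a : α, imp a a = 1)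
    (h7 : ∀ a b c : α, (a ⊔ b) * c = a * c ⊔ b * c)
    (h8 : ∀ a b c : α, imp a b * imp b c ≤ imp a c)
    (h9 : ∀ a b c : α, imp a b ≤ imp (a * c) (b * c))
    (n : ℕ) (hn : 1 ≤ n) (γ : α → α) :
    ((∀ a : α, a ⊔ imp ((γ a) ^ n) ⊥ ≤ γ a) ∧
     (∀ a b : α, γ a ≤ a ⊔ imp (b ^ n) ⊥ ⊔ b)) ↔
    ((imp ((γ ⊥) ^ n) ⊥ ≤ γ ⊥) ∧
     (∀ b : α, γ ⊥ ≤ b ⊔ imp (b ^ n) ⊥) ∧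
     (∀ a : α, γ a = a ⊔ γ ⊥)) :=
  dlcmi_gamma_characterization_general imp h5 h7 n γ
end
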